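/- Fix a point set P of 2n points in general position and an integer k ≥ 1. The number of distinct flips f = [p1p3, p2p4 → p1p4, p2p3] on P whose line-potential drop Φ_L-drop is less than k is at most C·n²·k² for an absolute constant C. More precisely, for any fixed directed final segment p1p4, there are at most 2k choices for p3 such that some flip with final segment p1p4 and removed segment p1p3 has potential drop < k. -/

import Mathlib

open scoped Classical

noncomputable section

/-- The plane. -/
abbrev Pl := ℝ × ℝ
/-- A segment, as an ordered pair of endpoints. -/
abbrev Seg := Pl × Pl

/-- The set of points of a segment. -/
def segSet (s : Seg) : Set Pl := segment ℝ s.1 s.2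

/-- Two segments cross: they intersect in exactly one point which is
not an endpoint of either. -/
def Cross (s t : Seg) : Prop :=
  ∃ x : Pl, segSet s ∩ segSet t = {x} ∧ x ≠ s.1 ∧ x ≠ s.2 ∧ x ≠ t.1 ∧ x ≠ t.2

/-- The line through two points. -/
def lineThrough (p q : Pl) : Set Pl := {x | Collinear ℝ ({p, q, x} : Set Pl)}

/-- A line crosses a segment: they intersect in exactly one point which is
not an endpoint of the segment. -/
def LineCross (l : Set Pl) (s : Seg) : Prop :=
  ∃ x : Pl, l ∩ segSet s = {x} ∧ x ≠ s.1 ∧ x ≠ s.2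

/-- Signed side of the line through `a` and `b` on which `x` lies. -/
def sideVal (a b x : Pl) : ℝ :=
  (b.1 - a.1) * (x.2 - a.2) - (b.2 - a.2) * (x.1 - a.1)

/-- General position: no three (distinct) points of `S` are collinear. -/
def GenPos (S : Set Pl) : Prop :=
  ∀ a ∈ S, ∀ b ∈ S, ∀ c ∈ S, a ≠ b → a ≠ c → b ≠ c → ¬ Collinear ℝ ({a, b, c} : Set Pl)

/-- Strictly convex position. -/
def ConvexPos (S : Set Pl) : Prop := ∀ p ∈ S, p ∉ convexHull ℝ (S \ {p})

/-- A set of segments is a matching: no degenerate segment and all endpoints distinct. -/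
def IsMatching (M : Finset Seg) : Prop :=
  (∀ s ∈ M, s.1 ≠ s.2) ∧
  ∀ s ∈ M, ∀ t ∈ M, s ≠ t → ({s.1, s.2} : Set Pl) ∩ {t.1, t.2} = ∅

/-- A perfect matching on the point set `P`. -/
def IsPM (P : Finset Pl) (M : Finset Seg) : Prop :=
  IsMatching M ∧ (∀ s ∈ M, s.1 ∈ P ∧ s.2 ∈ P) ∧
  ∀ p ∈ P, ∃ s ∈ M, p = s.1 ∨ p = s.2

/-- Number of (unordered) crossing pairs of segments of `M`. -/
def phiX (M : Finset Seg) : ℕ :=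
  Set.ncard {z : Sym2 Seg | ∃ u t : Seg, z = s(u, t) ∧ u ∈ M ∧ t ∈ M ∧ Cross u t}

/-- Number of segments of `M` crossed by the line `l`. -/
def phiLine (l : Set Pl) (M : Finset Seg) : ℕ :=
  Set.ncard {s : Seg | s ∈ M ∧ LineCross l s}

/-- All lines through two points of `P`. -/
def linesOf (P : Finset Pl) : Set (Set Pl) :=
  {l | ∃ p ∈ P, ∃ q ∈ P, p ≠ q ∧ l = lineThrough p q}

/-- The line potential with respect to a set of lines `L`. -/
def phiL (L : Set (Set Pl)) (M : Finset Seg) : ℕ := ∑ᶠ l ∈ L, phiLine l M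

/-- A flip in the matching version: replace a crossing pair by one of the two
non-crossing pairs on the same four endpoints. -/
def IsFlip (M M' : Finset Seg) : Prop :=
  ∃ p1 p2 p3 p4 : Pl,
    Cross (p1, p3) (p2, p4) ∧ (p1, p3) ∈ M ∧ (p2, p4) ∈ M ∧
    ((¬ Cross (p1, p4) (p2, p3) ∧ M' = (M \ {(p1, p3), (p2, p4)}) ∪ {(p1, p4), (p2, p3)}) ∨
     (¬ Cross (p1, p2) (p3, p4) ∧ M' = (M \ {(p1, p3), (p2, p4)}) ∪ {(p1, p2), (p3, p4)}))

/-- `t1, t2` reconnect the four endpoints of `s1, s2` forming a 4-cycle. -/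
def Rewires (s1 s2 t1 t2 : Seg) : Prop :=
  ∃ a b c d : Pl, ({s1.1, s1.2} : Set Pl) = {a, b} ∧ ({s2.1, s2.2} : Set Pl) = {c, d} ∧
    ((({t1.1, t1.2} : Set Pl) = {a, c} ∧ ({t2.1, t2.2} : Set Pl) = {b, d}) ∨
     (({t1.1, t1.2} : Set Pl) = {a, d} ∧ ({t2.1, t2.2} : Set Pl) = {b, c}))

/-- A flip in the multigraph (multiset) version. -/
def IsFlipMS (M M' : Multiset Seg) : Prop :=
  ∃ p1 p2 p3 p4 : Pl, Cross (p1, p3) (p2, p4) ∧ (p1, p3) ∈ M ∧ (p2, p4) ∈ M ∧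
    ∃ t1 t2 : Seg, Rewires (p1, p3) (p2, p4) t1 t2 ∧ ¬ Cross t1 t2 ∧
      M' = t1 ::ₘ t2 ::ₘ ((M.erase (p1, p3)).erase (p2, p4))

/-- A red-blue perfect matching: first coordinates red, second coordinates blue. -/
def IsRBPM (R B : Finset Pl) (M : Finset Seg) : Prop :=
  IsMatching M ∧ (∀ s ∈ M, s.1 ∈ R ∧ s.2 ∈ B) ∧
  (∀ p ∈ R, ∃ s ∈ M, p = s.1) ∧ (∀ p ∈ B, ∃ s ∈ M, p = s.2)

/-- A flip in the red-blue matching version (the replacement pair is forced). -/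
def IsRBFlip (M M' : Finset Seg) : Prop :=
  ∃ r1 b1 r2 b2 : Pl, Cross (r1, b1) (r2, b2) ∧ (r1, b1) ∈ M ∧ (r2, b2) ∈ M ∧
    ¬ Cross (r1, b2) (r2, b1) ∧ M' = (M \ {(r1, b1), (r2, b2)}) ∪ {(r1, b2), (r2, b1)}

/-- `T` is (the edge set of) a tour on `N` points. -/
def IsTour (T : Finset Seg) (N : ℕ) : Prop :=
  3 ≤ N ∧ ∃ v : Fin N → Pl, Function.Injective v ∧
    T = Finset.image (fun i : Fin N => (v i, v (finRotate N i))) Finset.univ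

/-- A flip in the TSP version: remove two crossing tour edges and reconnect the
four endpoints. -/
def IsTSPFlip (T T' : Finset Seg) : Prop :=
  ∃ s1 s2 t1 t2 : Seg, Cross s1 s2 ∧ s1 ∈ T ∧ s2 ∈ T ∧ Rewires s1 s2 t1 t2 ∧
    T' = (T \ {s1, s2}) ∪ {t1, t2}

/-- `a` and `b` are consecutive points on the convex-hull boundary of `Q`. -/
def HullEdge (Q : Finset Pl) (a b : Pl) : Prop :=
  a ∈ Q ∧ b ∈ Q ∧ a ≠ b ∧
  ((∀ c ∈ Q, c ≠ a → c ≠ b → 0 < sideVal a b c) ∨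
   (∀ c ∈ Q, c ≠ a → c ≠ b → sideVal a b c < 0))

/-- The line-potential drop of a flip, independent of the ambient matching. -/
def flipDrop (P : Finset Pl) (p1 p2 p3 p4 : Pl) : ℤ :=
  ∑ᶠ l ∈ linesOf P,
    ((phiLine l {(p1, p3), (p2, p4)} : ℤ) - (phiLine l {(p1, p4), (p2, p3)} : ℤ))


/-! A flip trades the crossing segments `p1p3, p2p4` for `p1p4, p2p3`. Restricted to a line `ℓ`
through two points of `P`, the number of segments crossed by `ℓ` can only go down, and it goes
down strictly when `ℓ` passes through `p1` and separates `p3` from `p4`. Order the points of `P` on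
one side of the line `p1p4` by their angle at `p1` measured from the ray `p1p4`: the lines from
`p1` to all points with a smaller angle than `p3` separate `p3` from `p4`, and they are distinct by
general position. So a flip of drop `< k` can only use a `p3` among the `k` smallest angles on
either side, at most `2k` choices; the same holds for `p2` with the roles reversed, and the
`(2n)²` choices of `(p1, p4)` give the bound `16 n² k²`. -/

local notation "χ" a:max b:max => (if a * b < 0 then (1 : ℤ) else 0)

section SignChanges

variable {a b c d x t u : ℝ}

lemma signChange_le_add (hx : x ≠ 0) : χ a d ≤ χ a x + χ x d := by
  split_ifs with had hax hxd hxd hax hxd hxd <;> norm_num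
  nlinarith [mul_nonneg (not_lt.1 hax) (not_lt.1 hxd),
    mul_neg_of_pos_of_neg (mul_self_pos.2 hx) had]

lemma signChange_eq_add (ht0 : 0 < t) (ht1 : t < 1) (hx : x = (1 - t) * a + t * c)
    (hx0 : x ≠ 0) : χ a c = χ a x + χ x c := by
  have hx2 : 0 < x * x := mul_self_pos.2 hx0
  have hax : a * x = (1 - t) * (a * a) + t * (a * c) := by rw [hx]; ring
  have hxc : x * c = (1 - t) * (a * c) + t * (c * c) := by rw [hx]; ring
  split_ifs <;> norm_num <;> nlinarith [mul_self_nonneg a, mul_self_nonneg c]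

lemma mul_neg_or_eq_zero_of_lineMap_eq_zero (ht0 : 0 < t) (ht1 : t < 1)
    (h : (1 - t) * a + t * c = 0) : a * c < 0 ∨ (a = 0 ∧ c = 0) := by
  by_cases ha : a = 0
  · subst ha
    exact Or.inr ⟨rfl, by simpa [ht0.ne'] using h⟩
  · have key : t * (a * c) = -((1 - t) * (a * a)) := by linear_combination a * h
    exact Or.inl (by nlinarith [mul_pos (sub_pos.2 ht1) (mul_self_pos.2 ha)])

/-- Values of an affine function at the endpoints of two segments `ac`, `bd` meeting at an
interior point: `ad` and `bc` together change sign at most as often as `ac` and `bd`. -/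
lemma signChange_cross_le (ht0 : 0 < t) (ht1 : t < 1) (hu0 : 0 < u) (hu1 : u < 1)
    (h : (1 - t) * a + t * c = (1 - u) * b + u * d) :
    χ a d + χ b c ≤ χ a c + χ b d := by
  by_cases hx0 : (1 - t) * a + t * c = 0
  · have hbd := mul_neg_or_eq_zero_of_lineMap_eq_zero hu0 hu1 (h ▸ hx0)
    rcases mul_neg_or_eq_zero_of_lineMap_eq_zero ht0 ht1 hx0 with hac | ⟨rfl, rfl⟩ <;>
    rcases hbd with hbd | ⟨rfl, rfl⟩ <;> clear h hx0 <;> split_ifs <;> simp_all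
  · -- split `ac` and `bd` at the crossing point, and route `ad` and `bc` through it
    rw [signChange_eq_add ht0 ht1 rfl hx0, signChange_eq_add hu0 hu1 h hx0]
    linarith [signChange_le_add (a := a) (d := d) hx0, signChange_le_add (a := b) (d := c) hx0]

lemma signChange_lt (ht0 : 0 < t) (hu0 : 0 < u) (hu1 : u < 1)
    (h : t * c = (1 - u) * b + u * d) (hcd : c * d < 0) :
    χ b c + 1 ≤ χ b d := by
  have hbc : (1 - u) * (b * c) = t * (c * c) - u * (c * d) := by linear_combination -c * h
  have hbd : (1 - u) * (b * d) = t * (c * d) - u * (d * d) := by linear_combination -d * h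
  have hc : 0 < c * c := mul_self_pos.2 (left_ne_zero_of_mul hcd.ne)
  split_ifs <;> norm_num <;> nlinarith [mul_self_nonneg d]

end SignChanges

section Sides

def sideValAffine (r s : Pl) : Pl →ᵃ[ℝ] ℝ where
  toFun := sideVal r s
  linear := (s.1 - r.1) • LinearMap.snd ℝ ℝ ℝ - (s.2 - r.2) • LinearMap.fst ℝ ℝ ℝ
  map_vadd' p v := by simp [sideVal]; ring

@[simp] lemma coe_sideValAffine (r s : Pl) : ⇑(sideValAffine r s) = sideVal r s := rfl

lemma sideVal_self_left (r x : Pl) : sideVal r r x = 0 := by simp [sideVal]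

lemma sideVal_self_right (r s : Pl) : sideVal r s r = 0 := by simp [sideVal]

lemma sideVal_comm (r s x : Pl) : sideVal r x s = -sideVal r s x := by
  simp only [sideVal]; ring

lemma sq_add_sq_sub_pos {r s : Pl} (hrs : r ≠ s) : 0 < (s.1 - r.1) ^ 2 + (s.2 - r.2) ^ 2 := by
  by_contra hn
  refine hrs (Prod.ext ?_ ?_) <;> nlinarith [sq_nonneg (s.1 - r.1), sq_nonneg (s.2 - r.2)]

lemma collinear_iff_sideVal_eq_zero {r s : Pl} (hrs : r ≠ s) (x : Pl) :
    Collinear ℝ ({r, s, x} : Set Pl) ↔ sideVal r s x = 0 := by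
  rw [collinear_iff_of_mem (Set.mem_insert r _)]
  constructor
  · rintro ⟨v, hv⟩
    obtain ⟨a, rfl⟩ := hv s (by simp)
    obtain ⟨b, rfl⟩ := hv x (by simp)
    simp only [sideVal, vadd_eq_add, Prod.fst_add, Prod.snd_add, Prod.smul_fst, Prod.smul_snd,
      smul_eq_mul]
    ring
  · intro h
    have hn := sq_add_sq_sub_pos hrs
    refine ⟨s - r, fun p hp => ?_⟩
    simp only [Set.mem_insert_iff, Set.mem_singleton_iff] at hp
    rcases hp with rfl | rfl | rfl
    · exact ⟨0, by simp⟩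
    · exact ⟨1, by simp⟩
    · -- the projection coefficient of `p - r` on `s - r`
      refine ⟨((s.1 - r.1) * (p.1 - r.1) + (s.2 - r.2) * (p.2 - r.2)) /
        ((s.1 - r.1) ^ 2 + (s.2 - r.2) ^ 2), ?_⟩
      simp only [sideVal] at h
      ext <;> simp <;> field_simp
      · linear_combination -(s.2 - r.2) * h
      · linear_combination (s.1 - r.1) * h

lemma GenPos.sideVal_ne_zero {S : Set Pl} (hS : GenPos S) {a b c : Pl} (ha : a ∈ S)
    (hb : b ∈ S) (hc : c ∈ S) (hab : a ≠ b) (hac : a ≠ c) (hbc : b ≠ c) : sideVal a b c ≠ 0 :=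
  fun h => hS a ha b hb c hc hab hac hbc ((collinear_iff_sideVal_eq_zero hab c).2 h)

lemma lineCross_setOf_eq_zero_iff (f : Pl →ᵃ[ℝ] ℝ) (a b : Pl) :
    LineCross {z | f z = 0} (a, b) ↔ f a * f b < 0 := by
  have hf : ∀ t : ℝ, f (AffineMap.lineMap a b t) = (1 - t) * f a + t * f b := fun t => by
    rw [AffineMap.apply_lineMap, AffineMap.lineMap_apply_ring]
  simp only [LineCross, segSet, segment_eq_image_lineMap]
  constructor
  · rintro ⟨x, hx, hxa, hxb⟩
    have hunique : ∀ t ∈ Set.Icc (0 : ℝ) 1, f (AffineMap.lineMap a b t) = 0 →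
        AffineMap.lineMap a b t = x := fun t ht h0 =>
      (Set.eq_singleton_iff_unique_mem.1 hx).2 _ ⟨h0, t, ht, rfl⟩
    obtain ⟨hx0, t, ht, rfl⟩ := (Set.eq_singleton_iff_unique_mem.1 hx).1
    have ha : f a ≠ 0 := fun h0 =>
      hxa (by simpa using (hunique 0 ⟨le_rfl, zero_le_one⟩ (by simpa using h0)).symm)
    have hb : f b ≠ 0 := fun h0 =>
      hxb (by simpa using (hunique 1 ⟨zero_le_one, le_rfl⟩ (by simpa using h0)).symm)
    replace hx0 : (1 - t) * f a + t * f b = 0 := (hf t).symm.trans hx0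
    have ht0 : t ≠ 0 := by rintro rfl; simp [ha] at hx0
    have ht1 : t ≠ 1 := by rintro rfl; simp [hb] at hx0
    exact (mul_neg_or_eq_zero_of_lineMap_eq_zero (lt_of_le_of_ne ht.1 (Ne.symm ht0))
      (lt_of_le_of_ne ht.2 ht1) hx0).resolve_right fun h => ha h.1
  · intro h
    have hab : f a - f b ≠ 0 := fun h0 => by
      rw [sub_eq_zero.1 h0] at h; exact (mul_self_nonneg _).not_gt h
    set t := f a / (f a - f b) with ht
    have hft : ∀ s : ℝ, f (AffineMap.lineMap a b s) = 0 ↔ s = t := fun s => by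
      rw [hf, ht, eq_div_iff hab]; constructor <;> intro h <;> linarith
    have htI : t ∈ Set.Icc (0 : ℝ) 1 := by
      rcases mul_neg_iff.1 h with ⟨ha, hb⟩ | ⟨ha, hb⟩
      · exact ⟨div_nonneg ha.le (by linarith), (div_le_one (by linarith)).2 (by linarith)⟩
      · exact ⟨div_nonneg_of_nonpos ha.le (by linarith),
          (div_le_one_of_neg (by linarith)).2 (by linarith)⟩
    have hx0 : f (AffineMap.lineMap a b t) = 0 := (hft t).2 rfl
    refine ⟨AffineMap.lineMap a b t, Set.eq_singleton_iff_unique_mem.2 ⟨⟨hx0, t, htI, rfl⟩, ?_⟩,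
      fun hxa => ?_, fun hxb => ?_⟩
    · rintro _ ⟨hy0, s, -, rfl⟩
      rw [(hft s).1 hy0]
    · rw [hxa] at hx0; simp [hx0] at h
    · rw [hxb] at hx0; simp [hx0] at h

lemma lineCross_lineThrough_iff {r s : Pl} (hrs : r ≠ s) (a b : Pl) :
    LineCross (lineThrough r s) (a, b) ↔ sideVal r s a * sideVal r s b < 0 := by
  have : lineThrough r s = {z | sideValAffine r s z = 0} :=
    Set.ext (collinear_iff_sideVal_eq_zero hrs)
  rw [this, lineCross_setOf_eq_zero_iff, coe_sideValAffine]

end Sides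

section Crossings

variable {a b c d : Pl}

lemma cross_comm {s t : Seg} : Cross s t ↔ Cross t s := by
  unfold Cross
  rw [Set.inter_comm]
  exact exists_congr fun x => by tauto

lemma cross_swap_iff : Cross (b, a) (d, c) ↔ Cross (a, b) (c, d) := by
  unfold Cross segSet
  rw [segment_symm ℝ b, segment_symm ℝ d]
  exact exists_congr fun x => by tauto

lemma Cross.endpoints_ne (h : Cross (a, b) (c, d)) : a ≠ b ∧ a ≠ c ∧ a ≠ d ∧ b ≠ d := by
  obtain ⟨x, hx, hxa, hxb, -⟩ := h
  have hmem : ∀ y ∈ segSet (a, b), y ∈ segSet (c, d) → y = x := fun y hy hy' =>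
    (hx ▸ ⟨hy, hy'⟩ : y ∈ ({x} : Set Pl))
  have hxab : x ∈ segSet (a, b) :=
    (hx.symm ▸ Set.mem_singleton x : x ∈ segSet (a, b) ∩ segSet (c, d)).1
  refine ⟨?_, ?_, ?_, ?_⟩ <;> rintro rfl
  · rw [segSet, segment_same] at hxab
    exact hxa hxab
  · exact hxa (hmem a (left_mem_segment ℝ _ _) (left_mem_segment ℝ _ _)).symm
  · exact hxa (hmem a (left_mem_segment ℝ _ _) (right_mem_segment ℝ _ _)).symm
  · exact hxb (hmem b (right_mem_segment ℝ _ _) (right_mem_segment ℝ _ _)).symm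

lemma Cross.exists_lineMap_eq (h : Cross (a, b) (c, d)) :
    ∃ t ∈ Set.Ioo (0 : ℝ) 1, ∃ u ∈ Set.Ioo (0 : ℝ) 1,
      AffineMap.lineMap a b t = AffineMap.lineMap c d u := by
  obtain ⟨x, hx, hxa, hxb, hxc, hxd⟩ := h
  have hmem : x ∈ segSet (a, b) ∩ segSet (c, d) := hx ▸ Set.mem_singleton x
  have hab := mem_openSegment_of_ne_left_right hxa.symm hxb.symm hmem.1
  have hcd := mem_openSegment_of_ne_left_right hxc.symm hxd.symm hmem.2
  rw [openSegment_eq_image_lineMap] at hab hcd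
  obtain ⟨t, ht, hta⟩ := hab
  obtain ⟨u, hu, huc⟩ := hcd
  exact ⟨t, ht, u, hu, hta.trans huc.symm⟩

end Crossings

section LinePotential

lemma phiLine_eq_sum (l : Set Pl) (M : Finset Seg) :
    phiLine l M = ∑ s ∈ M, if LineCross l s then 1 else 0 := by
  rw [phiLine, ← Finset.card_filter, ← Set.ncard_coe_finset, Finset.coe_filter]

lemma phiLine_pair (l : Set Pl) {s t : Seg} (hst : s ≠ t) :
    phiLine l {s, t} = (if LineCross l s then 1 else 0) + (if LineCross l t then 1 else 0) := by
  rw [phiLine_eq_sum, Finset.sum_pair hst]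

lemma lineCross_swap (l : Set Pl) (a b : Pl) : LineCross l (b, a) ↔ LineCross l (a, b) := by
  unfold LineCross segSet
  rw [segment_symm ℝ b]
  exact exists_congr fun x => by tauto

lemma phiLine_swap_pair (l : Set Pl) (a b c d : Pl) :
    phiLine l {(b, a), (d, c)} = phiLine l {(a, b), (c, d)} := by
  have : ({(b, a), (d, c)} : Finset Seg) = ({(a, b), (c, d)} : Finset Seg).image Prod.swap := by
    simp [Finset.image_insert]
  rw [this, phiLine_eq_sum, phiLine_eq_sum, Finset.sum_image Prod.swap_injective.injOn]
  exact Finset.sum_congr rfl fun s _ => by rw [← lineCross_swap l s.1 s.2]; rfl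

def lineDrop (l : Set Pl) (p1 p2 p3 p4 : Pl) : ℤ :=
  phiLine l {(p1, p3), (p2, p4)} - phiLine l {(p1, p4), (p2, p3)}

lemma lineDrop_reverse (l : Set Pl) (p1 p2 p3 p4 : Pl) :
    lineDrop l p4 p3 p2 p1 = lineDrop l p1 p2 p3 p4 := by
  rw [lineDrop, lineDrop, phiLine_swap_pair l p2 p4 p1 p3, phiLine_swap_pair l p1 p4 p2 p3,
    Finset.pair_comm (p2, p4)]

lemma lineDrop_lineThrough {r s p1 p2 p3 p4 : Pl} (hrs : r ≠ s) (h12 : p1 ≠ p2) :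
    lineDrop (lineThrough r s) p1 p2 p3 p4 =
      χ (sideVal r s p1) (sideVal r s p3) + χ (sideVal r s p2) (sideVal r s p4) -
        χ (sideVal r s p1) (sideVal r s p4) - χ (sideVal r s p2) (sideVal r s p3) := by
  have hne : ∀ x y : Pl, ((p1, x) : Seg) ≠ (p2, y) := fun x y h => h12 (congrArg Prod.fst h)
  rw [lineDrop, phiLine_pair _ (hne _ _), phiLine_pair _ (hne _ _)]
  simp only [lineCross_lineThrough_iff hrs]
  push_cast
  ring

variable {p1 p2 p3 p4 : Pl}

lemma Cross.sideVal_lineMap_eq (hC : Cross (p1, p3) (p2, p4)) (r s : Pl) :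
    ∃ t ∈ Set.Ioo (0 : ℝ) 1, ∃ u ∈ Set.Ioo (0 : ℝ) 1,
      (1 - t) * sideVal r s p1 + t * sideVal r s p3 =
        (1 - u) * sideVal r s p2 + u * sideVal r s p4 := by
  obtain ⟨t, ht, u, hu, h⟩ := hC.exists_lineMap_eq
  refine ⟨t, ht, u, hu, ?_⟩
  simpa only [AffineMap.apply_lineMap, AffineMap.lineMap_apply_ring, coe_sideValAffine] using
    congrArg (sideValAffine r s) h

lemma Cross.lineDrop_nonneg (hC : Cross (p1, p3) (p2, p4)) {r s : Pl} (hrs : r ≠ s) :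
    0 ≤ lineDrop (lineThrough r s) p1 p2 p3 p4 := by
  obtain ⟨t, ⟨ht0, ht1⟩, u, ⟨hu0, hu1⟩, h⟩ := hC.sideVal_lineMap_eq r s
  rw [lineDrop_lineThrough hrs hC.endpoints_ne.2.1]
  linarith [signChange_cross_le ht0 ht1 hu0 hu1 h]

lemma Cross.one_le_lineDrop (hC : Cross (p1, p3) (p2, p4)) {q : Pl}
    (hq : sideVal p1 q p3 * sideVal p1 q p4 < 0) :
    1 ≤ lineDrop (lineThrough p1 q) p1 p2 p3 p4 := by
  have hq1 : p1 ≠ q := by rintro rfl; simp [sideVal_self_left] at hq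
  obtain ⟨t, ⟨ht0, -⟩, u, ⟨hu0, hu1⟩, h⟩ := hC.sideVal_lineMap_eq p1 q
  rw [sideVal_self_right, mul_zero, zero_add] at h
  rw [lineDrop_lineThrough hq1 hC.endpoints_ne.2.1]
  simp only [sideVal_self_right, zero_mul, lt_irrefl, if_false]
  linarith [signChange_lt ht0 hu0 hu1 h hq]

end LinePotential

section Counting

variable {P : Finset Pl} {p1 p2 p3 p4 : Pl}

lemma linesOf_finite (P : Finset Pl) : (linesOf P).Finite := by
  refine ((P.finite_toSet.prod P.finite_toSet).image fun e => lineThrough e.1 e.2).subset ?_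
  rintro l ⟨p, hp, q, hq, -, rfl⟩
  exact ⟨(p, q), ⟨hp, hq⟩, rfl⟩

lemma flipDrop_eq_sum_lineDrop (P : Finset Pl) (p1 p2 p3 p4 : Pl) :
    flipDrop P p1 p2 p3 p4 =
      ∑ l ∈ (linesOf_finite P).toFinset, lineDrop l p1 p2 p3 p4 :=
  finsum_mem_eq_finite_toFinset_sum _ (linesOf_finite P)

lemma flipDrop_reverse (P : Finset Pl) (p1 p2 p3 p4 : Pl) :
    flipDrop P p4 p3 p2 p1 = flipDrop P p1 p2 p3 p4 :=
  finsum_mem_congr rfl fun l _ => lineDrop_reverse l p1 p2 p3 p4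

lemma card_le_flipDrop (hP : GenPos (P : Set Pl)) (h1 : p1 ∈ P) (hC : Cross (p1, p3) (p2, p4))
    {T : Finset Pl} (hTP : T ⊆ P) (hT : ∀ q ∈ T, sideVal p1 q p3 * sideVal p1 q p4 < 0) :
    (T.card : ℤ) ≤ flipDrop P p1 p2 p3 p4 := by
  have hq1 : ∀ q ∈ T, p1 ≠ q := fun q hq h => by
    subst h; simpa [sideVal_self_left] using hT _ hq
  have hinj : Set.InjOn (lineThrough p1) T := fun q hq q' hq' he => by
    by_contra hne
    have hmem : q' ∈ lineThrough p1 q := by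
      rw [he]; show Collinear ℝ {p1, q', q'}; simp [collinear_pair]
    exact hP p1 h1 q (hTP hq) q' (hTP hq') (hq1 q hq) (hq1 q' hq') hne hmem
  have hsub : T.image (lineThrough p1) ⊆ (linesOf_finite P).toFinset := fun l hl => by
    obtain ⟨q, hq, rfl⟩ := Finset.mem_image.1 hl
    exact (Set.Finite.mem_toFinset _).2 ⟨p1, h1, q, hTP hq, hq1 q hq, rfl⟩
  rw [flipDrop_eq_sum_lineDrop]
  calc (T.card : ℤ) = ∑ q ∈ T, 1 := by simp
    _ ≤ ∑ q ∈ T, lineDrop (lineThrough p1 q) p1 p2 p3 p4 :=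
      Finset.sum_le_sum fun q hq => hC.one_le_lineDrop (hT q hq)
    _ = ∑ l ∈ T.image (lineThrough p1), lineDrop l p1 p2 p3 p4 := by
      rw [Finset.sum_image hinj]
    _ ≤ _ := Finset.sum_le_sum_of_subset_of_nonneg hsub fun l hl _ => by
      obtain ⟨r, -, s, -, hrs, rfl⟩ := (Set.Finite.mem_toFinset _).1 hl
      exact hC.lineDrop_nonneg hrs

/-- Among points of `S` strictly on one side of the line `p1p4`, the one making the largest
angle with the ray `p1p4` is separated from `p4` by the line through `p1` and any other one. -/
lemma exists_separated_from_all {S : Set Pl} (hS : GenPos S) (h1 : p1 ∈ S) (h14 : p1 ≠ p4)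
    {A : Finset Pl} (hAS : ↑A ⊆ S) (hA : A.Nonempty) {σ : ℝ}
    (hσ : ∀ q ∈ A, 0 < σ * sideVal p1 p4 q) :
    ∃ m ∈ A, ∀ q ∈ A, q ≠ m → sideVal p1 q m * sideVal p1 q p4 < 0 := by
  -- the cotangent of the angle at `p1` between `p4` and `q`
  let cot : Pl → ℝ := fun q =>
    ((p4.1 - p1.1) * (q.1 - p1.1) + (p4.2 - p1.2) * (q.2 - p1.2)) / (σ * sideVal p1 p4 q)
  obtain ⟨m, hm, hmin⟩ := A.exists_min_image cot hA
  refine ⟨m, hm, fun q hq hqm => ?_⟩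
  have hne : ∀ x ∈ A, x ≠ p1 := fun x hx h => by
    have := hσ x hx; rw [h, sideVal_self_right, mul_zero] at this; exact this.false
  have hV := hS.sideVal_ne_zero h1 (hAS hq) (hAS hm) (hne q hq).symm (hne m hm).symm hqm
  have hσ0 : σ ≠ 0 := by rintro rfl; simpa using hσ q hq
  have hle := hmin q hq
  rw [div_le_div_iff₀ (hσ m hm) (hσ q hq)] at hle
  have hσV : 0 ≤ ((p4.1 - p1.1) ^ 2 + (p4.2 - p1.2) ^ 2) * (σ * sideVal p1 q m) := by
    simp only [sideVal] at hle ⊢; linarith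
  have hσV' : 0 < σ * sideVal p1 q m := lt_of_le_of_ne
    ((mul_nonneg_iff_of_pos_left (sq_add_sq_sub_pos h14)).1 hσV) (mul_ne_zero hσ0 hV).symm
  rw [sideVal_comm p1 p4 q]
  nlinarith [mul_pos hσV' (hσ q hq), sq_nonneg σ]

def lowDropThirds (P : Finset Pl) (k : ℕ) (p1 p4 : Pl) : Finset Pl :=
  P.filter fun p3 => ∃ p2 ∈ P, Cross (p1, p3) (p2, p4) ∧ ¬ Cross (p1, p4) (p2, p3) ∧
    flipDrop P p1 p2 p3 p4 < (k : ℤ)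

lemma card_filter_lowDropThirds_le (hP : GenPos (P : Set Pl)) (h1 : p1 ∈ P) (h14 : p1 ≠ p4)
    (k : ℕ) (σ : ℝ) :
    ((lowDropThirds P k p1 p4).filter fun q => 0 < σ * sideVal p1 p4 q).card ≤ k := by
  set A := (lowDropThirds P k p1 p4).filter fun q => 0 < σ * sideVal p1 p4 q
  have hAP : A ⊆ P := (Finset.filter_subset _ _).trans (Finset.filter_subset _ _)
  by_contra! hk
  obtain ⟨m, hm, hsep⟩ := exists_separated_from_all hP h1 h14 (Finset.coe_subset.2 hAP)
    (Finset.card_pos.1 (by omega)) fun q hq => (Finset.mem_filter.1 hq).2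
  obtain ⟨-, p2, -, hC, -, hlow⟩ := Finset.mem_filter.1 (Finset.mem_filter.1 hm).1
  have hT := card_le_flipDrop hP h1 hC ((Finset.erase_subset m A).trans hAP)
    fun q hq => hsep q (Finset.mem_of_mem_erase hq) (Finset.ne_of_mem_erase hq)
  rw [Finset.card_erase_of_mem hm] at hT
  omega

lemma card_lowDropThirds_le (hP : GenPos (P : Set Pl)) (h1 : p1 ∈ P) (h4 : p4 ∈ P)
    (h14 : p1 ≠ p4) (k : ℕ) : (lowDropThirds P k p1 p4).card ≤ 2 * k := by
  have hneg : ((lowDropThirds P k p1 p4).filter fun q => ¬ 0 < 1 * sideVal p1 p4 q) ⊆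
      (lowDropThirds P k p1 p4).filter fun q => 0 < -1 * sideVal p1 p4 q := by
    intro q hq
    obtain ⟨hq, hpos⟩ := Finset.mem_filter.1 hq
    obtain ⟨hqP, p2, -, hC, -⟩ := Finset.mem_filter.1 hq
    obtain ⟨h13, -, -, h34⟩ := hC.endpoints_ne
    have := hP.sideVal_ne_zero h1 h4 hqP h14 h13 h34.symm
    refine Finset.mem_filter.2 ⟨hq, ?_⟩
    rw [one_mul, not_lt] at hpos
    rw [neg_one_mul, neg_pos]
    exact lt_of_le_of_ne hpos this
  rw [← Finset.card_filter_add_card_filter_not fun q => 0 < 1 * sideVal p1 p4 q]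
  linarith [Finset.card_le_card hneg, card_filter_lowDropThirds_le hP h1 h14 k 1,
    card_filter_lowDropThirds_le hP h1 h14 k (-1)]

def lowDropFlips (P : Finset Pl) (k : ℕ) : Set (Pl × Pl × Pl × Pl) :=
  {q | q.1 ∈ P ∧ q.2.1 ∈ P ∧ q.2.2.1 ∈ P ∧ q.2.2.2 ∈ P ∧
    Cross (q.1, q.2.2.1) (q.2.1, q.2.2.2) ∧ ¬ Cross (q.1, q.2.2.2) (q.2.1, q.2.2.1) ∧
    flipDrop P q.1 q.2.1 q.2.2.1 q.2.2.2 < (k : ℤ)}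

lemma lowDropFlips_subset (P : Finset Pl) (k : ℕ) :
    lowDropFlips P k ⊆ ↑(P.offDiag.biUnion fun e =>
      (lowDropThirds P k e.2 e.1 ×ˢ lowDropThirds P k e.1 e.2).image
        fun x => (e.1, x.1, x.2, e.2)) := by
  rintro ⟨p1, p2, p3, p4⟩ ⟨h1, h2, h3, h4, hC, hnC, hlow⟩
  simp only [Finset.coe_biUnion, Set.mem_iUnion, Finset.mem_coe, Finset.mem_image,
    Finset.mem_product]
  refine ⟨(p1, p4), Finset.mem_offDiag.2 ⟨h1, h4, hC.endpoints_ne.2.2.1⟩, (p2, p3),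
    ⟨Finset.mem_filter.2 ⟨h2, p3, h3, ?_, ?_, ?_⟩, Finset.mem_filter.2 ⟨h3, p2, h2, hC, hnC, hlow⟩⟩,
    rfl⟩
  · exact cross_comm.1 (cross_swap_iff.2 hC)
  · exact fun h => hnC (cross_swap_iff.1 h)
  · rwa [flipDrop_reverse]

lemma ncard_lowDropFlips_le (hP : GenPos (P : Set Pl)) (k : ℕ) :
    (lowDropFlips P k).ncard ≤ P.card ^ 2 * (2 * k) ^ 2 := by
  refine (Set.ncard_le_ncard (lowDropFlips_subset P k)).trans ?_
  rw [Set.ncard_coe_finset]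
  refine (Finset.card_biUnion_le_card_mul _ _ (2 * k * (2 * k)) fun e he => ?_).trans ?_
  · obtain ⟨h1, h4, h14⟩ := Finset.mem_offDiag.1 he
    refine Finset.card_image_le.trans ?_
    rw [Finset.card_product]
    exact Nat.mul_le_mul (card_lowDropThirds_le hP h4 h1 h14.symm k)
      (card_lowDropThirds_le hP h1 h4 h14 k)
  · rw [Finset.offDiag_card, sq, sq]
    exact Nat.mul_le_mul_right _ (Nat.sub_le _ _)

end Counting

/-- the number of distinct flips on `P` with line-potential drop `< k` is
at most `C · n² · k²`; more precisely, for every fixed directed final segment `p1p4`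
there are at most `2k` choices of `p3` admitting such a flip. -/
theorem stmt12 :
    ∃ C : ℕ, 0 < C ∧ ∀ (n k : ℕ) (P : Finset Pl), P.card = 2 * n →
      GenPos (P : Set Pl) → 1 ≤ k →
      (Set.ncard {q : Pl × Pl × Pl × Pl |
          q.1 ∈ P ∧ q.2.1 ∈ P ∧ q.2.2.1 ∈ P ∧ q.2.2.2 ∈ P ∧
          Cross (q.1, q.2.2.1) (q.2.1, q.2.2.2) ∧
          ¬ Cross (q.1, q.2.2.2) (q.2.1, q.2.2.1) ∧
          flipDrop P q.1 q.2.1 q.2.2.1 q.2.2.2 < (k : ℤ)} ≤ C * n ^ 2 * k ^ 2) ∧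
      ∀ p1 ∈ P, ∀ p4 ∈ P, p1 ≠ p4 →
        Set.ncard {p3 : Pl | p3 ∈ P ∧ ∃ p2 ∈ P,
          Cross (p1, p3) (p2, p4) ∧ ¬ Cross (p1, p4) (p2, p3) ∧
          flipDrop P p1 p2 p3 p4 < (k : ℤ)} ≤ 2 * k := by
  refine ⟨16, by norm_num, fun n k P hcard hP _ => ⟨?_, fun p1 h1 p4 h4 h14 => ?_⟩⟩
  · calc (lowDropFlips P k).ncard ≤ P.card ^ 2 * (2 * k) ^ 2 := ncard_lowDropFlips_le hP k
      _ = 16 * n ^ 2 * k ^ 2 := by rw [hcard]; ring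
  · have := card_lowDropThirds_le hP h1 h4 h14 k
    rwa [lowDropThirds, ← Set.ncard_coe_finset, Finset.coe_filter] at this
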